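/- arXiv:1406.4799 — 5 statements merged into one kernel-verified Lean document; each statement's English description precedes it below -/
import Mathlib

section
/- For every integer k ≥ 3, the instance I_k admits a multi-commodity flow over time with time horizon T = k+1 (intermediate storage permitted). Concretely, there exist integrable flow-rate functions f^i_j : ℝ → ℝ≥0 vanishing outside [0, k+1) that satisfy the capacity constraints, the (weak) flow conservation constraints, and the demand constraints of I_k with T = k+1. -/
open MeasureTheory Set

/-- A multi-commodity flow over time with time horizon `T` for the cycle instance with `k` nodes
`v_0, …, v_{k-1}`, arcs `a_j = (v_j, v_{(j+1) % k})` of unit capacity and unit transit time,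
`k` commodities where commodity `i` has source `v_i`, sink `v_{(i-1) % k}` and demand `d i`.
`f i j` is the flow rate function of commodity `i` into arc `a_j`. -/
def IsMCFlow (k : ℕ) (T : ℝ) (d : ℕ → ℝ) (f : ℕ → ℕ → ℝ → ℝ) : Prop :=
  -- positive time horizon
  0 < T ∧
  -- integrable flow rate functions
  (∀ i < k, ∀ j < k, Integrable (f i j)) ∧
  -- nonnegative flow rates
  (∀ i < k, ∀ j < k, ∀ θ : ℝ, 0 ≤ f i j θ) ∧
  -- flow rates vanish outside [0, T)
  (∀ i < k, ∀ j < k, ∀ θ : ℝ, θ ∉ Ico (0 : ℝ) T → f i j θ = 0) ∧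
  -- capacity constraints, for almost every time
  (∀ j < k, ∀ᵐ θ : ℝ, ∑ i ∈ Finset.range k, f i j θ ≤ 1) ∧
  -- weak flow conservation: flow can only emerge from the source `v_i` of commodity `i`;
  -- node `v_m` has unique incoming arc `a_{(m-1) % k}` and unique outgoing arc `a_m`
  (∀ i < k, ∀ m < k, m ≠ i → ∀ θ ∈ Ico (0 : ℝ) T,
    0 ≤ (∫ ξ in (0 : ℝ)..(θ - 1), f i ((m + k - 1) % k) ξ) -
        ∫ ξ in (0 : ℝ)..θ, f i m ξ) ∧
  -- demands are fulfilled at time `T`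
  (∀ i < k, ∀ m < k,
    (∫ ξ in (0 : ℝ)..(T - 1), f i ((m + k - 1) % k) ξ) -
        (∫ ξ in (0 : ℝ)..T, f i m ξ) =
      if m = (i + k - 1) % k then d i
      else if m = i then -d i
      else 0)

/-- The flow is without intermediate storage: flow conservation holds with equality at every
node other than the source `v_i` and the sink `v_{(i-1) % k}` of each commodity `i`. -/
def NoStorage (k : ℕ) (T : ℝ) (f : ℕ → ℕ → ℝ → ℝ) : Prop :=
  ∀ i < k, ∀ m < k, m ≠ i → m ≠ (i + k - 1) % k → ∀ θ ∈ Ico (0 : ℝ) T,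
    (∫ ξ in (0 : ℝ)..(θ - 1), f i ((m + k - 1) % k) ξ) =
      ∫ ξ in (0 : ℝ)..θ, f i m ξ

/-- The demands of the instance `I_k`: commodity `0` has demand `2`,
all other commodities have demand `1`. -/
noncomputable def demandI (i : ℕ) : ℝ := if i = 0 then 2 else 1

/-!
Commodity `i` is sent as one block of `d_i` flow units at rate `1` along its path
`v_i → v_{i+1} → ⋯ → v_{i-1}`, entering the `p`-th arc of the path at time `p`, or `p + 1`
once the path has passed `v_0`. On the arc `a_j` the blocks of the commodities `1, …, j` then
fill `[0, j)`, that of commodity `0` (when `j ≠ k - 1`) fills `[j, j + 2)` and those of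
`j + 2, …, k - 1` fill `[j + 2, k)`, so the capacities are respected, and every block has
entered the last arc of its path by time `k = T - 1`.
-/

theorem volume_Ioc_inter_Ico {a a' b c : ℝ} (h : a ≤ b) :
    volume (Ioc a a' ∩ Ico b c) = ENNReal.ofReal (min a' c - b) := by
  apply le_antisymm
  · calc volume (Ioc a a' ∩ Ico b c) ≤ volume (Icc b (min a' c)) :=
          measure_mono fun x ⟨⟨_, hxa'⟩, hbx, hxc⟩ => ⟨hbx, le_min hxa' hxc.le⟩
      _ = ENNReal.ofReal (min a' c - b) := Real.volume_Icc
  · calc ENNReal.ofReal (min a' c - b) = volume (Ioo b (min a' c)) := Real.volume_Ioo.symm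
      _ ≤ volume (Ioc a a' ∩ Ico b c) := measure_mono fun x ⟨hbx, hxm⟩ =>
          ⟨⟨h.trans_lt hbx, (hxm.trans_le (min_le_left _ _)).le⟩,
            hbx.le, hxm.trans_le (min_le_right _ _)⟩

theorem intervalIntegral_indicator_Ico_one {s : ℝ} (hs : 0 ≤ s) (L a : ℝ) :
    ∫ ξ in (0 : ℝ)..a, (Ico s (s + L)).indicator 1 ξ = max (min (a - s) L) 0 := by
  rcases le_total 0 a with ha | ha
  · rw [intervalIntegral.integral_of_le ha, integral_indicator_one measurableSet_Ico,
      measureReal_restrict_apply measurableSet_Ico, measureReal_def, inter_comm,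
      volume_Ioc_inter_Ico hs, ENNReal.toReal_ofReal', ← min_sub_sub_right, add_sub_cancel_left]
  · rw [intervalIntegral.integral_of_ge ha, integral_indicator_one measurableSet_Ico,
      measureReal_restrict_apply measurableSet_Ico, measureReal_def, inter_comm,
      volume_Ioc_inter_Ico (ha.trans hs), ENNReal.toReal_ofReal',
      max_eq_right (by linarith [min_le_left 0 (s + L)]),
      max_eq_right (by linarith [min_le_left (a - s) L])]
    exact neg_zero

def demandNat (i : ℕ) : ℕ := if i = 0 then 2 else 1

theorem natCast_demandNat (i : ℕ) : (demandNat i : ℝ) = demandI i := by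
  unfold demandNat demandI; split_ifs <;> norm_num

/- Commodity `i` enters the arcs `a_i, a_{i+1}, …` of its path at times `0, 1, …`, except that a
path running through `v_0` waits there for one time unit: this is the intermediate storage. -/
def entryTime (k i j : ℕ) : ℕ := if i ≤ j then j - i else j + (k + 1) - i

noncomputable def cycleBlock (k i j : ℕ) : Set ℝ :=
  if j = (i + k - 1) % k then ∅ else Ico (entryTime k i j : ℝ) (entryTime k i j + demandI i)

noncomputable def cycleFlow (k i j : ℕ) : ℝ → ℝ := (cycleBlock k i j).indicator 1

section CycleFlow

variable {k i i' j m : ℕ}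

theorem add_sub_one_mod_eq (hm : m < k) : (m + k - 1) % k = if m = 0 then k - 1 else m - 1 := by
  split_ifs with h
  · subst h
    rw [zero_add, Nat.mod_eq_of_lt (by omega)]
  · rw [show m + k - 1 = m - 1 + k by omega, Nat.add_mod_right, Nat.mod_eq_of_lt (by omega)]

theorem entryTime_add_demandNat_le (hi : i < k) (hj : j < k) (hsink : j ≠ (i + k - 1) % k) :
    entryTime k i j + demandNat i ≤ k := by
  rw [add_sub_one_mod_eq hi] at hsink
  unfold entryTime demandNat
  split_ifs at hsink ⊢ <;> omega

theorem entryTime_add_demandNat_le_or_le (hi : i < k) (hi' : i' < k) (hne : i ≠ i') :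
    entryTime k i j + demandNat i ≤ entryTime k i' j ∨
      entryTime k i' j + demandNat i' ≤ entryTime k i j := by
  unfold entryTime demandNat
  split_ifs <;> omega

theorem entryTime_pred_add_one_le (hi : i < k) (hm : m < k) (hne : m ≠ i) :
    entryTime k i ((m + k - 1) % k) + 1 ≤ entryTime k i m := by
  rw [add_sub_one_mod_eq hm]
  unfold entryTime
  split_ifs <;> omega

theorem pred_mod_ne_pred_mod (hi : i < k) (hm : m < k) (hne : m ≠ i) :
    (m + k - 1) % k ≠ (i + k - 1) % k := by
  rw [add_sub_one_mod_eq hm, add_sub_one_mod_eq hi]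
  split_ifs <;> omega

theorem ne_add_sub_one_mod (hk : 2 ≤ k) (hi : i < k) : i ≠ (i + k - 1) % k := by
  rw [add_sub_one_mod_eq hi]
  split_ifs <;> omega

theorem cycleFlow_nonneg (k i j : ℕ) (θ : ℝ) : 0 ≤ cycleFlow k i j θ :=
  indicator_nonneg (fun _ _ => zero_le_one) θ

theorem integrable_cycleFlow (k i j : ℕ) : Integrable (cycleFlow k i j) := by
  unfold cycleFlow cycleBlock
  split_ifs
  · simp
  · exact (integrable_indicator_iff measurableSet_Ico).2 (integrableOn_const measure_Ico_lt_top.ne)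

theorem cycleBlock_subset (hi : i < k) (hj : j < k) : cycleBlock k i j ⊆ Ico 0 k := by
  unfold cycleBlock
  split_ifs with hsink
  · exact empty_subset _
  · rw [← natCast_demandNat]
    exact Ico_subset_Ico (Nat.cast_nonneg _)
      (by exact_mod_cast entryTime_add_demandNat_le hi hj hsink)

theorem pairwiseDisjoint_cycleBlock (k j : ℕ) :
    (Finset.range k : Set ℕ).PairwiseDisjoint (cycleBlock k · j) := by
  intro i hi i' hi' hne
  simp only [Finset.coe_range, mem_Iio] at hi hi'
  change Disjoint (cycleBlock k i j) (cycleBlock k i' j)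
  by_cases hsink : j = (i + k - 1) % k ∨ j = (i' + k - 1) % k
  · rcases hsink with hsink | hsink <;> simp [cycleBlock, hsink]
  · push Not at hsink
    simp only [cycleBlock, if_neg hsink.1, if_neg hsink.2, Ico_disjoint_Ico, ← natCast_demandNat]
    have := entryTime_add_demandNat_le_or_le (j := j) hi hi' hne
    norm_cast
    omega

theorem sum_cycleFlow_le_one (k j : ℕ) (θ : ℝ) :
    ∑ i ∈ Finset.range k, cycleFlow k i j θ ≤ 1 := by
  simp only [cycleFlow]
  rw [← Finset.indicator_biUnion_apply _ _ (pairwiseDisjoint_cycleBlock k j)]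
  exact indicator_apply_le' (fun _ => le_rfl) (fun _ => zero_le_one)

theorem integral_cycleFlow (k i j : ℕ) (a : ℝ) :
    ∫ ξ in (0 : ℝ)..a, cycleFlow k i j ξ =
      if j = (i + k - 1) % k then 0 else max (min (a - entryTime k i j) (demandI i)) 0 := by
  unfold cycleFlow cycleBlock
  split_ifs
  · simp
  · exact intervalIntegral_indicator_Ico_one (Nat.cast_nonneg _) _ _

theorem integral_cycleFlow_of_le (hi : i < k) (hj : j < k) {a : ℝ} (ha : k ≤ a) :
    ∫ ξ in (0 : ℝ)..a, cycleFlow k i j ξ = if j = (i + k - 1) % k then 0 else demandI i := by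
  rw [integral_cycleFlow]
  split_ifs with hsink
  · rfl
  · have hend : (entryTime k i j : ℝ) + demandI i ≤ k := by
      rw [← natCast_demandNat]
      exact_mod_cast entryTime_add_demandNat_le hi hj hsink
    rw [min_eq_right (by linarith), max_eq_left (natCast_demandNat i ▸ Nat.cast_nonneg _)]

theorem cycleFlow_conservation (hi : i < k) (hm : m < k) (hne : m ≠ i) (θ : ℝ) :
    ∫ ξ in (0 : ℝ)..θ, cycleFlow k i m ξ ≤
      ∫ ξ in (0 : ℝ)..(θ - 1), cycleFlow k i ((m + k - 1) % k) ξ := by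
  have hwait : (entryTime k i ((m + k - 1) % k) : ℝ) + 1 ≤ entryTime k i m := by
    exact_mod_cast entryTime_pred_add_one_le hi hm hne
  rw [integral_cycleFlow, integral_cycleFlow, if_neg (pred_mod_ne_pred_mod hi hm hne)]
  split_ifs
  · exact le_max_right _ _
  · exact max_le_max (min_le_min_right _ (by linarith)) le_rfl

theorem cycleFlow_demand (hk : 2 ≤ k) (hi : i < k) (hm : m < k) :
    (∫ ξ in (0 : ℝ)..k, cycleFlow k i ((m + k - 1) % k) ξ) -
        ∫ ξ in (0 : ℝ)..(k + 1), cycleFlow k i m ξ =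
      if m = (i + k - 1) % k then demandI i else if m = i then -demandI i else 0 := by
  rw [integral_cycleFlow_of_le hi (Nat.mod_lt _ (by omega)) le_rfl,
    integral_cycleFlow_of_le hi hm (by linarith)]
  by_cases hmi : m = i
  · subst hmi
    simp [ne_add_sub_one_mod hk hi]
  · simp only [pred_mod_ne_pred_mod hi hm hmi, hmi, if_false]
    split_ifs <;> ring

end CycleFlow

/-- For every `k ≥ 3`, the instance `I_k` admits a multi-commodity flow over time
(with intermediate storage permitted) with time horizon `T = k + 1`. -/
theorem exists_flow_with_storage_horizon_k_add_one (k : ℕ) (hk : 3 ≤ k) :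
    ∃ f : ℕ → ℕ → ℝ → ℝ, IsMCFlow k ((k : ℝ) + 1) demandI f := by
  refine ⟨cycleFlow k, by positivity, fun i _ j _ => integrable_cycleFlow k i j,
    fun i _ j _ => cycleFlow_nonneg k i j, fun i hi j hj θ hθ => ?_,
    fun j _ => ae_of_all _ (sum_cycleFlow_le_one k j), fun i hi m hm hne θ _ => ?_,
    fun i hi m hm => ?_⟩
  · exact indicator_of_notMem
      (fun h => hθ (Ico_subset_Ico_right (by linarith) (cycleBlock_subset hi hj h))) _
  · exact sub_nonneg.2 (cycleFlow_conservation hi hm hne θ)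
  · rw [add_sub_cancel_right]
    exact cycleFlow_demand (by omega) hi hm
end

section
/- For every integer k ≥ 3, the instance I_k admits no multi-commodity flow over time without intermediate storage whose time horizon T satisfies T ≤ 2k−2. Equivalently, if storage at intermediate nodes is forbidden, the minimal time horizon needed to route all demands of I_k is strictly greater than 2k−2. -/
open MeasureTheory Set

/-- Cancellation for residues: if `(i + r) % k = (i + s) % k` with `r, s < k` then `r = s`. -/
lemma addModInj {k r s : ℕ} (hr : r < k) (hs : s < k) (i : ℕ)
    (h : (i + r) % k = (i + s) % k) : r = s := by
  have h' : i + r ≡ i + s [MOD k] := h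
  have h2 : r ≡ s [MOD k] := Nat.ModEq.add_left_cancel' i h'
  rwa [Nat.ModEq, Nat.mod_eq_of_lt hr, Nat.mod_eq_of_lt hs] at h2

/-- Cumulative flow of commodity `i` into arc `j` up to time `x`. -/
noncomputable def Fcum (f : ℕ → ℕ → ℝ → ℝ) (i j : ℕ) (x : ℝ) : ℝ :=
  ∫ ξ in (0:ℝ)..x, f i j ξ

/-- For every `k ≥ 3`, the instance `I_k` admits no multi-commodity flow over time without
intermediate storage whose time horizon `T` satisfies `T ≤ 2k - 2`: every such flow has
time horizon strictly greater than `2k - 2`. -/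
theorem no_storage_horizon_gt_two_k_sub_two (k : ℕ) (hk : 3 ≤ k) (T : ℝ)
    (f : ℕ → ℕ → ℝ → ℝ) (hf : IsMCFlow k T demandI f) (hns : NoStorage k T f) :
    2 * (k : ℝ) - 2 < T := by
  obtain ⟨hT, hint, hpos, hvan, hcap, hcons, hdem⟩ := hf
  have hk0 : 0 < k := by omega
  -- interval integrability
  have hii : ∀ i < k, ∀ j < k, ∀ a b : ℝ, IntervalIntegrable (f i j) volume a b :=
    fun i hi j hj a b => (hint i hi j hj).intervalIntegrable
  have hdiff : ∀ i < k, ∀ j < k, ∀ a b : ℝ,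
      Fcum f i j b - Fcum f i j a = ∫ ξ in a..b, f i j ξ := by
    intro i hi j hj a b
    have h := intervalIntegral.integral_add_adjacent_intervals
      (hii i hi j hj 0 a) (hii i hi j hj a b)
    have h1 : Fcum f i j a = ∫ ξ in (0:ℝ)..a, f i j ξ := rfl
    have h2 : Fcum f i j b = ∫ ξ in (0:ℝ)..b, f i j ξ := rfl
    rw [h1, h2]; linarith
  have hmono : ∀ i < k, ∀ j < k, ∀ a b : ℝ, a ≤ b → Fcum f i j a ≤ Fcum f i j b := by
    intro i hi j hj a b hab
    have h1 := hdiff i hi j hj a b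
    have h2 : 0 ≤ ∫ ξ in a..b, f i j ξ :=
      intervalIntegral.integral_nonneg hab (fun u _ => hpos i hi j hj u)
    linarith
  have hF0 : ∀ i < k, ∀ j < k, ∀ x : ℝ, x ≤ 0 → Fcum f i j x = 0 := by
    intro i hi j hj x hx
    have hne : ∀ᵐ ξ : ℝ, ξ ≠ 0 := by
      rw [ae_iff]
      have : {a : ℝ | ¬a ≠ 0} = {(0:ℝ)} := by ext a; simp
      rw [this]
      exact measure_singleton 0
    have h1 : (∫ ξ in x..(0:ℝ), f i j ξ) = 0 := by
      rw [intervalIntegral.integral_congr_ae (g := fun _ => (0:ℝ)) ?_,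
        intervalIntegral.integral_zero]
      filter_upwards [hne] with ξ hξ hmem
      rw [Set.uIoc_of_le hx] at hmem
      exact hvan i hi j hj ξ (fun hmem' => hξ (le_antisymm hmem.2 hmem'.1))
    show (∫ ξ in (0:ℝ)..x, f i j ξ) = 0
    rw [intervalIntegral.integral_symm, h1, neg_zero]
  -- the rigid wave identity along commodity i's path
  have wave : ∀ r, r ≤ k - 2 → ∀ i < k, ∀ θ : ℝ, θ < T →
      Fcum f i ((i + r) % k) θ = Fcum f i i (θ - r) := by
    intro r
    induction r with
    | zero =>
      intro _ i hi θ _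
      rw [Nat.add_zero, Nat.mod_eq_of_lt hi]
      norm_num
    | succ r ih =>
      intro hr i hi θ hθ
      have hrk : r ≤ k - 2 := by omega
      have hm : (i + (r+1)) % k < k := Nat.mod_lt _ hk0
      by_cases hθ0 : 0 ≤ θ
      · have hmi : (i + (r+1)) % k ≠ i := by
          intro h
          have h0 : (i + (r+1)) % k = (i + 0) % k := by
            rw [h, Nat.add_zero, Nat.mod_eq_of_lt hi]
          have := addModInj (by omega) hk0 i h0
          omega
        have hms : (i + (r+1)) % k ≠ (i + k - 1) % k := by
          intro h
          have h0 : (i + (r+1)) % k = (i + (k-1)) % k := by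
            rw [h]; congr 1; omega
          have := addModInj (by omega) (by omega) i h0
          omega
        have hns' : Fcum f i (((i + (r+1)) % k + k - 1) % k) (θ - 1)
            = Fcum f i ((i + (r+1)) % k) θ :=
          hns i hi ((i + (r+1)) % k) hm hmi hms θ ⟨hθ0, hθ⟩
        have harc : ((i + (r+1)) % k + k - 1) % k = (i + r) % k := by
          rw [show (i + (r+1)) % k + k - 1 = (i + (r+1)) % k + (k-1) by omega,
            Nat.mod_add_mod, show i + (r+1) + (k-1) = (i + r) + k by omega,
            Nat.add_mod_right]
        rw [harc] at hns'
        rw [← hns', ih hrk i hi (θ - 1) (by linarith)]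
        congr 1
        push_cast
        ring
      · push_neg at hθ0
        rw [hF0 i hi _ hm θ hθ0.le, hF0 i hi i hi _ ?_]
        have : (0:ℝ) ≤ ((r+1 : ℕ) : ℝ) := Nat.cast_nonneg _
        linarith
  -- demand satisfaction forces mass of commodity i injected by time T - (k-1)
  have hsink : ∀ i < k, demandI i ≤ Fcum f i i (T - ((k:ℝ) - 1)) := by
    intro i hi
    have hm : (i + k - 1) % k < k := Nat.mod_lt _ hk0
    have hd := hdem i hi ((i + k - 1) % k) hm
    rw [if_pos rfl] at hd
    have hd' : Fcum f i (((i + k - 1) % k + k - 1) % k) (T - 1)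
        - Fcum f i ((i + k - 1) % k) T = demandI i := hd
    have harc : ((i + k - 1) % k + k - 1) % k = (i + (k - 2)) % k := by
      rw [show (i + k - 1) % k + k - 1 = (i + k - 1) % k + (k-1) by omega,
        Nat.mod_add_mod, show i + k - 1 + (k-1) = (i + (k-2)) + k by omega,
        Nat.add_mod_right]
    rw [harc] at hd'
    have hw := wave (k-2) le_rfl i hi (T - 1) (by linarith)
    rw [hw] at hd'
    have hcast : ((k - 2 : ℕ) : ℝ) = (k : ℝ) - 2 := by
      rw [Nat.cast_sub (by omega : 2 ≤ k)]; norm_num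
    have hargs : T - 1 - ((k - 2 : ℕ) : ℝ) = T - ((k:ℝ) - 1) := by
      rw [hcast]; ring
    rw [hargs] at hd'
    have h0 : Fcum f i ((i+k-1)%k) 0 = 0 := hF0 i hi _ hm 0 le_rfl
    have hge : 0 ≤ Fcum f i ((i+k-1)%k) T := by
      have := hmono i hi _ hm 0 T hT.le; linarith
    linarith
  have hd0 : demandI 0 = 2 := by simp [demandI]
  have hTgt : (k:ℝ) - 1 < T := by
    by_contra h
    push_neg at h
    have h2 := hsink 0 hk0
    rw [hF0 0 hk0 0 hk0 _ (by linarith)] at h2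
    rw [hd0] at h2
    linarith
  -- assume for contradiction T ≤ 2k - 2
  by_contra hcon
  push_neg at hcon
  -- per-commodity lower bound from the telescoping wave identity
  have hper : ∀ i < k, demandI i ≤
      ∑ j ∈ Finset.range k, (Fcum f i j ((k:ℝ) - 1) - Fcum f i j ((k:ℝ) - 2)) := by
    intro i hi
    have h1 : demandI i ≤ Fcum f i i ((k:ℝ) - 1) :=
      le_trans (hsink i hi) (hmono i hi i hi _ _ (by linarith))
    have key : ∀ r ∈ Finset.range (k-1),
        Fcum f i ((i + r) % k) ((k:ℝ) - 1) - Fcum f i ((i + r) % k) ((k:ℝ) - 2) =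
        (fun r : ℕ => Fcum f i i ((k:ℝ) - 1 - r)) r
          - (fun r : ℕ => Fcum f i i ((k:ℝ) - 1 - r)) (r + 1) := by
      intro r hr
      simp only [Finset.mem_range] at hr
      have hr2 : r ≤ k - 2 := by omega
      have hw1 := wave r hr2 i hi ((k:ℝ) - 1) (by linarith)
      have hw2 := wave r hr2 i hi ((k:ℝ) - 2) (by linarith)
      rw [hw1, hw2]
      beta_reduce
      push_cast
      try ring_nf
    have htel : ∑ r ∈ Finset.range (k-1),
        (Fcum f i ((i + r) % k) ((k:ℝ) - 1) - Fcum f i ((i + r) % k) ((k:ℝ) - 2))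
        = Fcum f i i ((k:ℝ) - 1) := by
      rw [Finset.sum_congr rfl key,
        Finset.sum_range_sub' (fun r : ℕ => Fcum f i i ((k:ℝ) - 1 - r)) (k-1)]
      have hz : Fcum f i i ((k:ℝ) - 1 - ((k-1 : ℕ) : ℝ)) = 0 := by
        apply hF0 i hi i hi
        rw [Nat.cast_sub (by omega : 1 ≤ k)]
        norm_num
      simp only [Nat.cast_zero, sub_zero, hz]
      try ring
    have himg : ∑ r ∈ Finset.range (k-1),
        (Fcum f i ((i + r) % k) ((k:ℝ) - 1) - Fcum f i ((i + r) % k) ((k:ℝ) - 2))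
        ≤ ∑ j ∈ Finset.range k, (Fcum f i j ((k:ℝ) - 1) - Fcum f i j ((k:ℝ) - 2)) := by
      have hinj : ∀ x ∈ Finset.range (k-1), ∀ y ∈ Finset.range (k-1),
          (i + x) % k = (i + y) % k → x = y := by
        intro x hx y hy h
        simp only [Finset.mem_range] at hx hy
        exact addModInj (by omega) (by omega) i h
      have e1 := Finset.sum_image
        (f := fun j => Fcum f i j ((k:ℝ) - 1) - Fcum f i j ((k:ℝ) - 2)) hinj
      refine le_trans (le_of_eq e1.symm) ?_
      apply Finset.sum_le_sum_of_subset_of_nonneg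
      · intro j hj
        simp only [Finset.mem_image] at hj
        obtain ⟨r, _, rfl⟩ := hj
        exact Finset.mem_range.2 (Nat.mod_lt _ hk0)
      · intro j hj _
        exact sub_nonneg.2 (hmono i hi j (Finset.mem_range.1 hj) _ _ (by linarith))
    calc demandI i ≤ Fcum f i i ((k:ℝ) - 1) := h1
      _ = _ := htel.symm
      _ ≤ _ := himg
  -- capacity bound per arc over the time interval [k-2, k-1]
  have hcap' : ∀ j < k,
      ∑ i ∈ Finset.range k, (Fcum f i j ((k:ℝ) - 1) - Fcum f i j ((k:ℝ) - 2)) ≤ 1 := by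
    intro j hj
    have hab : (k:ℝ) - 2 ≤ (k:ℝ) - 1 := by linarith
    have h1 : ∀ i ∈ Finset.range k, Fcum f i j ((k:ℝ) - 1) - Fcum f i j ((k:ℝ) - 2)
        = ∫ ξ in ((k:ℝ) - 2)..((k:ℝ) - 1), f i j ξ :=
      fun i hi => hdiff i (Finset.mem_range.1 hi) j hj _ _
    rw [Finset.sum_congr rfl h1,
      ← intervalIntegral.integral_finset_sum
        (fun i hi => hii i (Finset.mem_range.1 hi) j hj _ _)]
    calc (∫ ξ in ((k:ℝ) - 2)..((k:ℝ) - 1), ∑ i ∈ Finset.range k, f i j ξ)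
        ≤ ∫ _ in ((k:ℝ) - 2)..((k:ℝ) - 1), (1:ℝ) := by
          apply intervalIntegral.integral_mono_ae hab
          · exact (integrable_finset_sum _
              (fun i hi => hint i (Finset.mem_range.1 hi) j hj)).intervalIntegrable
          · exact intervalIntegrable_const
          · exact hcap j hj
      _ = 1 := by
          rw [intervalIntegral.integral_const, smul_eq_mul, mul_one]; ring
  -- sum everything up: k + 1 ≤ k, contradiction
  have hsumd : ∑ i ∈ Finset.range k, demandI i = (k:ℝ) + 1 := by
    have h : ∀ i ∈ Finset.range k, demandI i = 1 + (if i = 0 then (1:ℝ) else 0) := by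
      intro i _
      unfold demandI
      split <;> norm_num
    rw [Finset.sum_congr rfl h, Finset.sum_add_distrib, Finset.sum_const,
      Finset.sum_ite_eq' (Finset.range k) 0 (fun _ => (1:ℝ)),
      if_pos (Finset.mem_range.2 hk0)]
    simp
  have hA : ∑ i ∈ Finset.range k, demandI i ≤
      ∑ i ∈ Finset.range k, ∑ j ∈ Finset.range k,
        (Fcum f i j ((k:ℝ) - 1) - Fcum f i j ((k:ℝ) - 2)) :=
    Finset.sum_le_sum (fun i hi => hper i (Finset.mem_range.1 hi))
  rw [Finset.sum_comm] at hA
  have hB : ∑ j ∈ Finset.range k, ∑ i ∈ Finset.range k,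
      (Fcum f i j ((k:ℝ) - 1) - Fcum f i j ((k:ℝ) - 2))
      ≤ ∑ _j ∈ Finset.range k, (1:ℝ) :=
    Finset.sum_le_sum (fun j hj => hcap' j (Finset.mem_range.1 hj))
  rw [Finset.sum_const, Finset.card_range, nsmul_eq_mul, mul_one] at hB
  rw [hsumd] at hA
  linarith
end

section
/- Let k ≥ 3 and suppose f is a multi-commodity flow over time without intermediate storage for the instance I_k with time horizon T = 2k−2. Then for every commodity i, all of its flow must be sent into some arc during the time interval [k−2, k−1); in particular, ∑_{j=0}^{k-1} ∫_{k-2}^{k-1} f^i_j(ξ) dξ ≥ d_i, and summing over commodities, ∑_{j=0}^{k-1} ∑_{i=0}^{k-1} ∫_{k-2}^{k-1} f^i_j(ξ) dξ ≥ ∑_{i=0}^{k-1} d_i = k+1. -/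
open MeasureTheory Set

/-- For `k ≥ 3` and any multi-commodity flow over time without intermediate storage for `I_k`
with time horizon `T = 2k - 2`, every commodity must send all of its flow into some arc during
the time interval `[k - 2, k - 1)`; summing over commodities, the total flow sent into all arcs
during `[k - 2, k - 1)` is at least the total demand `k + 1`. -/
theorem all_flow_in_critical_interval (k : ℕ) (hk : 3 ≤ k) (f : ℕ → ℕ → ℝ → ℝ)
    (hf : IsMCFlow k (2 * (k : ℝ) - 2) demandI f)
    (hns : NoStorage k (2 * (k : ℝ) - 2) f) :
    (∀ i < k,
      demandI i ≤ ∑ j ∈ Finset.range k, ∫ ξ in ((k : ℝ) - 2)..((k : ℝ) - 1), f i j ξ) ∧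
    (k : ℝ) + 1 ≤
      ∑ j ∈ Finset.range k, ∑ i ∈ Finset.range k,
        ∫ ξ in ((k : ℝ) - 2)..((k : ℝ) - 1), f i j ξ := by

  obtain ⟨hT, hint, hpos, hvan, hcap, hcons, hdem⟩ := hf
  have hk0 : 0 < k := by omega
  have hkR : (3:ℝ) ≤ (k:ℝ) := by exact_mod_cast hk
  set T : ℝ := 2 * (k:ℝ) - 2 with hTdef
  have castk : ∀ s : ℕ, s ≤ k → ((k - s : ℕ):ℝ) = (k:ℝ) - (s:ℝ) := by
    intro s hs; rw [Nat.cast_sub hs]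
  have main : ∀ i < k,
      demandI i ≤ ∑ j ∈ Finset.range k, ∫ ξ in ((k : ℝ) - 2)..((k : ℝ) - 1), f i j ξ := by
    intro i hi
    have modlt : ∀ s : ℕ, (i + s) % k < k := fun s => Nat.mod_lt _ hk0
    have mod_inj : ∀ s s' : ℕ, s < k → s' < k → (i + s) % k = (i + s') % k → s = s' := by
      intro s s' hs hs' h
      have h2 : s ≡ s' [MOD k] := Nat.ModEq.add_left_cancel' i h
      have := Nat.mod_eq_of_lt hs
      have := Nat.mod_eq_of_lt hs'
      unfold Nat.ModEq at h2
      omega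
    have arc : ∀ s : ℕ, 1 ≤ s → ((i + s) % k + k - 1) % k = (i + (s - 1)) % k := by
      intro s hs
      have h1 : (i + s) % k + k - 1 = (i + s) % k + (k - 1) := by omega
      rw [h1, Nat.mod_add_mod]
      have h2 : i + s + (k - 1) = i + (s - 1) + k := by omega
      rw [h2, Nat.add_mod_right]
    have shift : ∀ r : ℕ, r ≤ k - 2 → ∀ θ : ℝ, (r:ℝ) ≤ θ → θ < T →
        (∫ ξ in (0:ℝ)..θ, f i ((i + r) % k) ξ) = ∫ ξ in (0:ℝ)..(θ - r), f i i ξ := by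
      intro r
      induction r with
      | zero => intro _ θ _ _; simp [Nat.mod_eq_of_lt hi]
      | succ r ih =>
        intro hr θ hθ1 hθ2
        have hm : (i + (r+1)) % k < k := modlt _
        have hne1 : (i + (r+1)) % k ≠ i := by
          intro h
          have h0 : (i + (r+1)) % k = (i + 0) % k := by
            simpa [Nat.mod_eq_of_lt hi] using h
          have := mod_inj _ _ (by omega) (by omega) h0
          omega
        have hne2 : (i + (r+1)) % k ≠ (i + k - 1) % k := by
          intro h
          have h0 : (i + (r+1)) % k = (i + (k-1)) % k := by
            rw [h]; congr 1; omega
          have := mod_inj _ _ (by omega) (by omega) h0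
          omega
        have h0θ : (0:ℝ) ≤ θ := le_trans (by positivity) hθ1
        have hns' := hns i hi _ hm hne1 hne2 θ ⟨h0θ, hθ2⟩
        rw [arc (r+1) (by omega)] at hns'
        simp only [Nat.add_sub_cancel] at hns'
        rw [← hns']
        have hrr : (r:ℝ) ≤ θ - 1 := by push_cast at hθ1; linarith
        rw [ih (by omega) (θ - 1) hrr (by linarith)]
        congr 1
        push_cast
        ring
    set g : ℕ → ℝ := fun s => ∫ ξ in (0:ℝ)..(s:ℝ), f i i ξ with hg
    -- Step 1: d i ≤ g (k-1)
    have harc : ((i + k - 1) % k + k - 1) % k = (i + (k-2)) % k := by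
      have h1 : i + k - 1 = i + (k-1) := by omega
      rw [h1, arc (k-1) (by omega)]
      congr 2
    have hmlt : (i + k - 1) % k < k := Nat.mod_lt _ hk0
    have hdem' := hdem i hi ((i + k - 1) % k) hmlt
    rw [if_pos rfl, harc] at hdem'
    have nn : 0 ≤ ∫ ξ in (0:ℝ)..T, f i ((i + k - 1) % k) ξ :=
      intervalIntegral.integral_nonneg (le_of_lt hT) (fun u _ => hpos i hi _ hmlt u)
    have hsink : demandI i ≤ ∫ ξ in (0:ℝ)..(T-1), f i ((i + (k-2)) % k) ξ := by linarith
    have hcast2 : ((k-2 : ℕ):ℝ) = (k:ℝ) - 2 := by rw [castk 2 (by omega)]; norm_num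
    have hcast1 : ((k-1 : ℕ):ℝ) = (k:ℝ) - 1 := by rw [castk 1 (by omega)]; norm_num
    have h1 : demandI i ≤ g (k-1) := by
      have hs := shift (k-2) le_rfl (T-1) (by rw [hcast2]; simp only [hTdef]; linarith)
        (by simp only [hTdef]; linarith)
      rw [hs] at hsink
      have hb : T - 1 - ((k-2:ℕ):ℝ) = ((k-1:ℕ):ℝ) := by
        rw [hcast2, hcast1]; simp only [hTdef]; ring
      rw [hb] at hsink
      exact hsink
    -- Step 2: each critical-interval integral is a telescoping difference
    have step2 : ∀ r, r < k - 1 →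
        (∫ ξ in ((k:ℝ)-2)..((k:ℝ)-1), f i ((i+r)%k) ξ) = g (k-1-r) - g (k-2-r) := by
      intro r hr
      have hik : ((i+r)%k) < k := modlt r
      have hsplit := intervalIntegral.integral_interval_sub_left
        ((hint i hi _ hik).intervalIntegrable (a := (0:ℝ)) (b := (k:ℝ)-1))
        ((hint i hi _ hik).intervalIntegrable (a := (0:ℝ)) (b := (k:ℝ)-2))
      have hrk : (r:ℝ) ≤ (k:ℝ) - 2 := by
        have : (r:ℝ) + 2 ≤ (k:ℝ) := by exact_mod_cast (by omega : r + 2 ≤ k)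
        linarith
      have hs1 := shift r (by omega) ((k:ℝ)-1) (by linarith) (by simp only [hTdef]; linarith)
      have hs2 := shift r (by omega) ((k:ℝ)-2) hrk (by simp only [hTdef]; linarith)
      have hb1 : (k:ℝ) - 1 - (r:ℝ) = ((k-1-r:ℕ):ℝ) := by
        have : k - 1 - r = k - (1 + r) := by omega
        rw [this, castk (1+r) (by omega)]; push_cast; ring
      have hb2 : (k:ℝ) - 2 - (r:ℝ) = ((k-2-r:ℕ):ℝ) := by
        have : k - 2 - r = k - (2 + r) := by omega
        rw [this, castk (2+r) (by omega)]; push_cast; ring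
      rw [← hsplit, hs1, hs2, hb1, hb2]
    -- Step 3: telescoping sum
    have step3 : ∑ r ∈ Finset.range (k-1), (g (k-1-r) - g (k-2-r)) = g (k-1) := by
      have hre := Finset.sum_range_reflect (fun r => g (k-1-r) - g (k-2-r)) (k-1)
      have he : ∀ j ∈ Finset.range (k-1),
          g (k-1-(k-1-1-j)) - g (k-2-(k-1-1-j)) = g (j+1) - g j := by
        intro j hj
        have hjk := Finset.mem_range.mp hj
        have e1 : k-1-(k-1-1-j) = j + 1 := by omega
        have e2 : k-2-(k-1-1-j) = j := by omega
        rw [e1, e2]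
      rw [← hre, Finset.sum_congr rfl he, Finset.sum_range_sub]
      have : g 0 = 0 := by simp [hg]
      rw [this]
      ring
    -- Step 4: sum over distinct arcs is at most total sum
    have hnonneg : ∀ j ∈ Finset.range k,
        0 ≤ ∫ ξ in ((k:ℝ)-2)..((k:ℝ)-1), f i j ξ := by
      intro j hj
      exact intervalIntegral.integral_nonneg (by linarith)
        (fun u _ => hpos i hi j (Finset.mem_range.mp hj) u)
    have hinj : ∀ x ∈ Finset.range (k-1), ∀ y ∈ Finset.range (k-1),
        (i + x) % k = (i + y) % k → x = y := by
      intro x hx y hy h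
      exact mod_inj x y (by have := Finset.mem_range.mp hx; omega)
        (by have := Finset.mem_range.mp hy; omega) h
    have himg := Finset.sum_image (s := Finset.range (k-1)) (g := fun r => (i+r)%k)
      (f := fun j => ∫ ξ in ((k:ℝ)-2)..((k:ℝ)-1), f i j ξ) hinj
    have hstep4 : ∑ r ∈ Finset.range (k-1), (∫ ξ in ((k:ℝ)-2)..((k:ℝ)-1), f i ((i+r)%k) ξ)
        ≤ ∑ j ∈ Finset.range k, ∫ ξ in ((k:ℝ)-2)..((k:ℝ)-1), f i j ξ := by
      rw [← himg]
      apply Finset.sum_le_sum_of_subset_of_nonneg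
      · intro j hj
        rw [Finset.mem_image] at hj
        obtain ⟨r, _, rfl⟩ := hj
        exact Finset.mem_range.mpr (modlt r)
      · intro j hj _
        exact hnonneg j hj
    calc demandI i ≤ g (k-1) := h1
      _ = ∑ r ∈ Finset.range (k-1), (g (k-1-r) - g (k-2-r)) := step3.symm
      _ = ∑ r ∈ Finset.range (k-1), ∫ ξ in ((k:ℝ)-2)..((k:ℝ)-1), f i ((i+r)%k) ξ := by
          exact Finset.sum_congr rfl fun r hr => (step2 r (Finset.mem_range.mp hr)).symm
      _ ≤ ∑ j ∈ Finset.range k, ∫ ξ in ((k:ℝ)-2)..((k:ℝ)-1), f i j ξ := hstep4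
  refine ⟨main, ?_⟩
  rw [Finset.sum_comm]
  have hsum : ∑ i ∈ Finset.range k, demandI i = (k:ℝ) + 1 := by
    have hval : ∀ i, demandI i = 1 + if i = 0 then (1:ℝ) else 0 := by
      intro i; unfold demandI; split_ifs <;> norm_num
    rw [Finset.sum_congr rfl fun i _ => hval i, Finset.sum_add_distrib,
      Finset.sum_const, Finset.sum_ite_eq' (Finset.range k) 0 (fun _ => (1:ℝ)),
      if_pos (Finset.mem_range.mpr hk0)]
    simp
  calc (k:ℝ) + 1 = ∑ i ∈ Finset.range k, demandI i := hsum.symm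
    _ ≤ ∑ i ∈ Finset.range k, ∑ j ∈ Finset.range k,
        ∫ ξ in ((k:ℝ)-2)..((k:ℝ)-1), f i j ξ :=
      Finset.sum_le_sum fun i hi => main i (Finset.mem_range.mp hi)
end

section
/- For every integer k ≥ 3 and every ε > 0, the modified instance I_k(1+ε) with demands d_0 = 1+ε and d_i = 1 for i = 1,…,k−1 admits no multi-commodity flow over time without intermediate storage whose time horizon T satisfies T ≤ 2k−2. -/
open MeasureTheory Set

/-!
Write `F_{i,j}(θ) = ∫₀^θ f i j` for the cumulative inflow of commodity `i` into arc `a_j`.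
Without storage, commodity `i` crosses the `k - 1` arcs `a_i, …, a_{i+k-2}` of its path with a
delay of exactly one per arc, so `F_{i,i+r}(θ) = F_{i,i}(θ - r)` up to the horizon. Meeting the
demand at the sink by time `T` forces `F_{i,i}(T - k + 1) ≥ d_i`. If `T ≤ 2k - 2`, take the unit
window `[W - 1, W]` with `W = min T (k - 1)`: the amounts of commodity `i` entering its `k - 1` arcs
during it telescope to `F_{i,i}(W) - F_{i,i}(W - k + 1) = F_{i,i}(W) ≥ d_i`. Summed over all
commodities, the `k` arcs of unit capacity would carry the total demand `k + ε` within one unit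
of time.
-/

open Finset

lemma add_one_mod_add_sub_one_mod {k : ℕ} (hk : 0 < k) (n : ℕ) :
    ((n + 1) % k + k - 1) % k = n % k := by
  rw [show (n + 1) % k + k - 1 = (n + 1) % k + (k - 1) by omega, Nat.mod_add_mod,
    show n + 1 + (k - 1) = n + k by omega, Nat.add_mod_right]

lemma eq_of_add_mod_eq_add_mod {k i r₁ r₂ : ℕ} (h₁ : r₁ < k) (h₂ : r₂ < k)
    (h : (i + r₁) % k = (i + r₂) % k) : r₁ = r₂ := by
  have := Nat.ModEq.add_left_cancel' i h
  rwa [Nat.ModEq, Nat.mod_eq_of_lt h₁, Nat.mod_eq_of_lt h₂] at this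

lemma sum_range_add_mod_le {k : ℕ} (g : ℕ → ℝ) (hg : ∀ j < k, 0 ≤ g j) (i : ℕ) {n : ℕ}
    (hn : n ≤ k) : ∑ r ∈ range n, g ((i + r) % k) ≤ ∑ j ∈ range k, g j := by
  rw [← sum_image fun r₁ h₁ r₂ h₂ h => eq_of_add_mod_eq_add_mod
    (by simp at h₁; omega) (by simp at h₂; omega) h]
  refine sum_le_sum_of_subset_of_nonneg ?_ fun j hj _ => hg j (mem_range.mp hj)
  intro j hj
  obtain ⟨r, hr, rfl⟩ := mem_image.mp hj
  exact mem_range.mpr (Nat.mod_lt _ (by simp at hr; omega))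

noncomputable def cumulative (g : ℝ → ℝ) (θ : ℝ) : ℝ := ∫ ξ in (0 : ℝ)..θ, g ξ

section Cumulative

variable {g : ℝ → ℝ}

lemma cumulative_sub_cumulative (hg : Integrable g) (a b : ℝ) :
    cumulative g b - cumulative g a = ∫ ξ in a..b, g ξ :=
  intervalIntegral.integral_interval_sub_left hg.intervalIntegrable hg.intervalIntegrable

lemma monotone_cumulative (hg : Integrable g) (hg₀ : ∀ θ, 0 ≤ g θ) :
    Monotone (cumulative g) := fun a b hab => by
  rw [← sub_nonneg, cumulative_sub_cumulative hg]
  exact intervalIntegral.integral_nonneg hab fun θ _ => hg₀ θ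

lemma cumulative_eq_zero_of_nonpos (hg : ∀ θ < 0, g θ = 0) {θ : ℝ} (hθ : θ ≤ 0) :
    cumulative g θ = 0 := by
  refine intervalIntegral.integral_zero_ae ?_
  filter_upwards [Measure.ae_ne volume (0 : ℝ)] with ξ hξ hξθ
  rw [uIoc_of_ge hθ] at hξθ
  exact hg ξ (lt_of_le_of_ne hξθ.2 hξ)

end Cumulative

namespace IsMCFlow

variable {k : ℕ} {T : ℝ} {d : ℕ → ℝ} {f : ℕ → ℕ → ℝ → ℝ} {i j : ℕ}

lemma monotone_cumulative (hf : IsMCFlow k T d f) (hi : i < k) (hj : j < k) :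
    Monotone (cumulative (f i j)) := by
  obtain ⟨-, hint, hnonneg, -⟩ := hf
  exact _root_.monotone_cumulative (hint i hi j hj) (hnonneg i hi j hj)

lemma cumulative_eq_zero_of_nonpos (hf : IsMCFlow k T d f) (hi : i < k) (hj : j < k)
    {θ : ℝ} (hθ : θ ≤ 0) : cumulative (f i j) θ = 0 := by
  obtain ⟨-, -, -, hsupp, -⟩ := hf
  exact _root_.cumulative_eq_zero_of_nonpos
    (fun ξ hξ => hsupp i hi j hj ξ fun h => (not_le.mpr hξ) h.1) hθ

lemma cumulative_nonneg (hf : IsMCFlow k T d f) (hi : i < k) (hj : j < k) {θ : ℝ}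
    (hθ : 0 ≤ θ) : 0 ≤ cumulative (f i j) θ :=
  (hf.cumulative_eq_zero_of_nonpos hi hj le_rfl).symm.le.trans (hf.monotone_cumulative hi hj hθ)

lemma cumulative_eq_cumulative_pred (hf : IsMCFlow k T d f) (hns : NoStorage k T f)
    {m : ℕ} (hi : i < k) (hm : m < k) (hmi : m ≠ i) (hms : m ≠ (i + k - 1) % k) {θ : ℝ}
    (hθ : θ ≤ T) : cumulative (f i m) θ = cumulative (f i ((m + k - 1) % k)) (θ - 1) := by
  have hpred : (m + k - 1) % k < k := Nat.mod_lt _ (by omega)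
  rcases lt_or_ge θ 0 with hθ₀ | hθ₀
  · rw [hf.cumulative_eq_zero_of_nonpos hi hm hθ₀.le,
      hf.cumulative_eq_zero_of_nonpos hi hpred (by linarith)]
  rcases hθ.lt_or_eq with hθT | rfl
  · exact (hns i hi m hm hmi hms θ ⟨hθ₀, hθT⟩).symm
  · -- `NoStorage` stops short of the horizon; at `θ = T` the demand constraint takes over
    obtain ⟨-, -, -, -, -, -, hdemand⟩ := hf
    have := hdemand i hi m hm
    rw [if_neg hms, if_neg hmi] at this
    exact (sub_eq_zero.mp this).symm

lemma cumulative_add_mod (hf : IsMCFlow k T d f) (hns : NoStorage k T f) (hi : i < k)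
    {r : ℕ} (hr : r ≤ k - 2) {θ : ℝ} (hθ : θ ≤ T) :
    cumulative (f i ((i + r) % k)) θ = cumulative (f i i) (θ - r) := by
  induction r generalizing θ with
  | zero => simp [Nat.mod_eq_of_lt hi]
  | succ r ih =>
    have hk : 0 < k := by omega
    have hmi : (i + (r + 1)) % k ≠ i := fun h => by
      have := eq_of_add_mod_eq_add_mod (r₂ := 0) (by omega) hk (h.trans (Nat.mod_eq_of_lt hi).symm)
      omega
    have hms : (i + (r + 1)) % k ≠ (i + k - 1) % k := fun h => by
      rw [Nat.add_sub_assoc (by omega : 1 ≤ k)] at h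
      have := eq_of_add_mod_eq_add_mod (by omega) (by omega) h
      omega
    rw [hf.cumulative_eq_cumulative_pred hns hi (Nat.mod_lt _ hk) hmi hms hθ,
      ← add_assoc, add_one_mod_add_sub_one_mod hk, ih (by omega) (by linarith)]
    push_cast
    ring_nf

lemma le_cumulative_source (hf : IsMCFlow k T d f) (hns : NoStorage k T f) (hk : 2 ≤ k)
    (hi : i < k) : d i ≤ cumulative (f i i) (T - (k - 1)) := by
  have hsink : (i + k - 1) % k < k := Nat.mod_lt _ (by omega)
  have hpred : ((i + k - 1) % k + k - 1) % k = (i + (k - 2)) % k := by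
    rw [show i + k - 1 = i + (k - 2) + 1 by omega, add_one_mod_add_sub_one_mod (by omega)]
  have ⟨hT, _, _, _, _, _, hdemand⟩ := hf
  have hdemand : cumulative _ _ - cumulative _ _ = _ := hdemand i hi _ hsink
  rw [if_pos rfl, hpred] at hdemand
  have hprop := hf.cumulative_add_mod hns hi le_rfl (θ := T - 1) (by linarith)
  rw [Nat.cast_sub hk, Nat.cast_ofNat, show T - 1 - ((k : ℝ) - 2) = T - (k - 1) by ring] at hprop
  have := hf.cumulative_nonneg hi hsink hT.le
  linarith

lemma le_sum_window (hf : IsMCFlow k T d f) (hns : NoStorage k T f) (hk : 2 ≤ k)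
    (hi : i < k) {W : ℝ} (hW : T - (k - 1) ≤ W) (hWT : W ≤ T) (hWk : W ≤ k - 1) :
    d i ≤ ∑ j ∈ range k, (cumulative (f i j) W - cumulative (f i j) (W - 1)) := by
  set F : ℕ → ℝ := fun r => cumulative (f i i) (W - r)
  have hsweep : ∑ r ∈ range (k - 1),
      (cumulative (f i ((i + r) % k)) W - cumulative (f i ((i + r) % k)) (W - 1)) =
      cumulative (f i i) W := by
    calc _ = ∑ r ∈ range (k - 1), (F r - F (r + 1)) := by
          refine sum_congr rfl fun r hr => ?_
          have hr : r ≤ k - 2 := by simp at hr; omega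
          rw [hf.cumulative_add_mod hns hi hr hWT, hf.cumulative_add_mod hns hi hr (by linarith)]
          simp only [F, Nat.cast_succ, sub_sub, add_comm]
      _ = cumulative (f i i) W := by
          have hF : F (k - 1) = 0 := hf.cumulative_eq_zero_of_nonpos hi hi
            (by rw [Nat.cast_sub (by omega : 1 ≤ k)]; push_cast; linarith)
          rw [sum_range_sub', hF, sub_zero]
          simp [F]
  calc d i ≤ cumulative (f i i) W :=
        (hf.le_cumulative_source hns hk hi).trans (hf.monotone_cumulative hi hi hW)
    _ ≤ _ := hsweep ▸ sum_range_add_mod_le _ (fun j hj => sub_nonneg.mpr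
        (hf.monotone_cumulative hi hj (by linarith))) i (Nat.sub_le k 1)

lemma sum_window_le (hf : IsMCFlow k T d f) (hj : j < k) {a b : ℝ} (hab : a ≤ b) :
    ∑ i ∈ range k, (cumulative (f i j) b - cumulative (f i j) a) ≤ b - a := by
  have ⟨_, hint, _, _, hcap, _⟩ := hf
  replace hint : ∀ i ∈ range k, Integrable (f i j) := fun i hi => hint i (mem_range.mp hi) j hj
  calc _ = ∫ θ in a..b, ∑ i ∈ range k, f i j θ := by
        rw [intervalIntegral.integral_finsetSum fun i hi => (hint i hi).intervalIntegrable]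
        exact sum_congr rfl fun i hi => cumulative_sub_cumulative (hint i hi) a b
    _ ≤ ∫ _ in a..b, (1 : ℝ) := intervalIntegral.integral_mono_ae hab
        (integrable_finsetSum _ hint).intervalIntegrable intervalIntegrable_const (hcap j hj)
    _ = b - a := by simp

lemma sum_demand_le (hf : IsMCFlow k T d f) (hns : NoStorage k T f) (hk : 2 ≤ k)
    (hT : T ≤ 2 * k - 2) : ∑ i ∈ range k, d i ≤ k := by
  set W := min T (k - 1 : ℝ)
  have hWT : W ≤ T := min_le_left _ _
  have hWk : W ≤ k - 1 := min_le_right _ _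
  have hW : T - (k - 1) ≤ W := le_min (by linarith [hf.1]) (by linarith)
  calc ∑ i ∈ range k, d i
      ≤ ∑ i ∈ range k, ∑ j ∈ range k, (cumulative (f i j) W - cumulative (f i j) (W - 1)) :=
        sum_le_sum fun i hi => hf.le_sum_window hns hk (mem_range.mp hi) hW hWT hWk
    _ = ∑ j ∈ range k, ∑ i ∈ range k, (cumulative (f i j) W - cumulative (f i j) (W - 1)) :=
        sum_comm
    _ ≤ ∑ j ∈ range k, (W - (W - 1)) :=
        sum_le_sum fun j hj => hf.sum_window_le (mem_range.mp hj) (by linarith)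
    _ = k := by simp

end IsMCFlow

/-- For every `k ≥ 3` and `ε > 0`, the modified instance `I_k(1+ε)` with demands
`d 0 = 1 + ε` and `d i = 1` for `i ≥ 1` admits no multi-commodity flow over time without
intermediate storage whose time horizon `T` satisfies `T ≤ 2k - 2`. -/
theorem perturbed_demand_no_storage_horizon_gt (k : ℕ) (hk : 3 ≤ k) (ε : ℝ) (hε : 0 < ε)
    (T : ℝ) (f : ℕ → ℕ → ℝ → ℝ)
    (hf : IsMCFlow k T (fun i => if i = 0 then 1 + ε else 1) f)
    (hns : NoStorage k T f) :
    2 * (k : ℝ) - 2 < T := by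
  by_contra! hT
  have hle := hf.sum_demand_le hns (by omega) hT
  have htotal : ∑ i ∈ range k, (if i = 0 then 1 + ε else 1) = (k : ℝ) + ε := by
    rw [← Nat.sub_add_cancel (by omega : 1 ≤ k), sum_range_succ']
    simp only [Nat.add_eq_zero_iff, one_ne_zero, and_false, ↓reduceIte, sum_const, card_range,
      nsmul_eq_mul, mul_one, Nat.cast_add, Nat.cast_one]
    ring
  linarith
end

section
/- For every integer k ≥ 3, the optimal time horizon without intermediate storage, viewed as a function of the demand d_0 of commodity 0 on the cycle instance (with all other demands fixed at 1), is not continuous at d_0 = 1. Precisely: the infimum T*(d_0) of time horizons T over all feasible multi-commodity flows over time without intermediate storage for the modified instance I_k(d_0) satisfies T*(1) ≤ k, while T*(1+ε) ≥ 2k−2 for every ε > 0; since 2k−2 > k for k ≥ 3, the function T* is not right-continuous at d_0 = 1. -/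
open MeasureTheory Set

/-- `Tstar k d₀` is the infimum of all time horizons `T` for which the modified cycle instance
`I_k(d₀)` (commodity `0` has demand `d₀`, all other commodities have demand `1`) admits a
multi-commodity flow over time without intermediate storage. -/
noncomputable def Tstar (k : ℕ) (d₀ : ℝ) : ℝ :=
  sInf {T : ℝ | ∃ f : ℕ → ℕ → ℝ → ℝ,
    IsMCFlow k T (fun i => if i = 0 then d₀ else 1) f ∧ NoStorage k T f}

/-!
With unit demands, commodity `i` sends its unit at rate one during `[0, 1)` along
`v_i → v_{i+1} → ⋯ → v_{i-1}`; the `k` pulses travel around the cycle in lockstep and never share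
an arc, so `T = k` is feasible. An extra amount `ε` of commodity `0` can follow after time `k - 1`,
when the cycle is empty again; so time horizons for demand `1 + ε` exist.

Conversely, without storage the cumulative flow of commodity `i` on the `l`-th arc of its path is
its cumulative outflow from the source delayed by `l`. If `T ≤ 2k - 2`, put `S = T - (k - 1)`:
the demand of `i` leaves the source within `[S - (k - 1), S]`, since `S - (k - 1) ≤ 0`, so the
arcs `l = 0, …, k - 2` of its path carry all of it during the window `[S - 1, S]`. The `k` arcs
have total capacity `k` in that window, so the demands sum to at most `k`, which demand `1 + ε`
of commodity `0` exceeds.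
-/
namespace CycleFlow

lemma mod_eq_ite_of_lt_two_mul {a k : ℕ} (h : a < 2 * k) : a % k = if a < k then a else a - k := by
  split_ifs with h'
  · exact Nat.mod_eq_of_lt h'
  · rw [Nat.mod_eq_sub_mod (not_lt.1 h'), Nat.mod_eq_of_lt (by omega)]

/-- Position of the arc `a_j` (or of the node `v_j`) on the path of commodity `i`, which starts
at `v_i` and runs around the cycle. -/
def rel (k i j : ℕ) : ℕ := (j + k - i) % k

variable {k i j m : ℕ}

lemma rel_lt (hk : 0 < k) : rel k i j < k := Nat.mod_lt _ hk

lemma rel_eq_ite (hi : i < k) (hj : j < k) : rel k i j = if i ≤ j then j - i else j + k - i := by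
  rw [rel, mod_eq_ite_of_lt_two_mul (by omega)]; split_ifs <;> omega

lemma add_sub_one_mod_eq_ite (hm : m < k) : (m + k - 1) % k = if m = 0 then k - 1 else m - 1 := by
  rw [mod_eq_ite_of_lt_two_mul (by omega)]; split_ifs <;> omega

lemma rel_eq_zero_iff (hi : i < k) (hm : m < k) : rel k i m = 0 ↔ m = i := by
  rw [rel_eq_ite hi hm]; split_ifs <;> omega

lemma rel_eq_sub_one_iff (hi : i < k) (hm : m < k) :
    rel k i m = k - 1 ↔ m = (i + k - 1) % k := by
  rw [rel_eq_ite hi hm, add_sub_one_mod_eq_ite hi]; split_ifs <;> omega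

lemma rel_pred (hi : i < k) (hm : m < k) (hmi : m ≠ i) :
    rel k i ((m + k - 1) % k) + 1 = rel k i m := by
  rw [rel_eq_ite hi hm, rel_eq_ite hi (Nat.mod_lt _ (by omega)), add_sub_one_mod_eq_ite hm]
  split_ifs <;> omega

lemma add_sub_one_mod_ne_self (hk : 2 ≤ k) (hi : i < k) : (i + k - 1) % k ≠ i := by
  rw [add_sub_one_mod_eq_ite hi]; split_ifs <;> omega

lemma rel_pred_self (hi : i < k) : rel k i ((i + k - 1) % k) = k - 1 :=
  (rel_eq_sub_one_iff hi (Nat.mod_lt _ (by omega))).2 rfl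

lemma sum_comp_rel_right {M : Type*} [AddCommMonoid M] (hi : i < k) (g : ℕ → M) :
    ∑ j ∈ Finset.range k, g (rel k i j) = ∑ l ∈ Finset.range k, g l := by
  refine Finset.sum_nbij' (rel k i) (fun l => (i + l) % k) (fun j _ => ?_) (fun l _ => ?_)
    (fun j hj => ?_) (fun l hl => ?_) (fun _ _ => rfl) <;>
    simp only [Finset.mem_range] at *
  · exact rel_lt (by omega)
  · exact Nat.mod_lt _ (by omega)
  · rw [rel_eq_ite hi hj, mod_eq_ite_of_lt_two_mul (by split_ifs <;> omega)]; split_ifs <;> omega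
  · rw [mod_eq_ite_of_lt_two_mul (by omega)]
    split_ifs <;> rw [rel_eq_ite hi (by omega)] <;> split_ifs <;> omega

lemma sum_comp_rel_left {M : Type*} [AddCommMonoid M] (hj : j < k) (g : ℕ → M) :
    ∑ i ∈ Finset.range k, g (rel k i j) = ∑ l ∈ Finset.range k, g l := by
  refine Finset.sum_nbij' (rel k · j) (fun l => (j + k - l) % k) (fun i _ => ?_) (fun l _ => ?_)
    (fun i hi => ?_) (fun l hl => ?_) (fun _ _ => rfl) <;>
    simp only [Finset.mem_range] at *
  · exact rel_lt (by omega)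
  · exact Nat.mod_lt _ (by omega)
  · rw [rel_eq_ite hi hj, mod_eq_ite_of_lt_two_mul (by split_ifs <;> omega)]; split_ifs <;> omega
  · rw [mod_eq_ite_of_lt_two_mul (by omega)]
    split_ifs <;> rw [rel_eq_ite (by omega) hj] <;> split_ifs <;> omega

/-- Amount of a unit-rate pulse of length `δ` that has passed a point `x` time units after the
pulse started. -/
def ramp (δ x : ℝ) : ℝ := max (min x δ) 0

lemma ramp_nonneg (δ x : ℝ) : 0 ≤ ramp δ x := le_max_right _ _

lemma ramp_zero_left (x : ℝ) : ramp 0 x = 0 := by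
  simp only [ramp]; rcases le_total x 0 with h | h <;> simp [h]

lemma ramp_of_le {δ x : ℝ} (hδ : 0 ≤ δ) (h : δ ≤ x) : ramp δ x = δ := by
  simp [ramp, h, hδ]

lemma intervalIntegral_indicator_Ico {a b u v : ℝ} (huv : u ≤ v) :
    ∫ ξ in u..v, (Ico a b).indicator 1 ξ = max (min b v - max a u) 0 := by
  have hae : (Ico a b).indicator (1 : ℝ → ℝ) =ᵐ[volume] (Ioc a b).indicator 1 :=
    indicator_ae_eq_of_ae_eq_set Ico_ae_eq_Ioc
  rw [intervalIntegral.integral_of_le huv, integral_congr_ae (ae_restrict_of_ae hae),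
    integral_indicator_one measurableSet_Ioc, measureReal_restrict_apply measurableSet_Ioc,
    Set.Ioc_inter_Ioc, Real.volume_real_Ioc]

lemma integral_indicator_Ico {a : ℝ} (ha : 0 ≤ a) (δ θ : ℝ) :
    ∫ ξ in (0 : ℝ)..θ, (Ico a (a + δ)).indicator 1 ξ = ramp δ (θ - a) := by
  rcases le_total 0 θ with hθ | hθ
  · rw [intervalIntegral_indicator_Ico hθ, max_eq_left ha, ramp, min_comm, ← min_sub_sub_right,
      add_sub_cancel_left]
  · have h₁ : ramp δ (θ - a) = 0 := max_eq_right (min_le_of_left_le (by linarith))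
    have h₂ : min (a + δ) 0 - max a θ ≤ 0 := by
      linarith [min_le_right (a + δ) 0, le_max_left a θ]
    rw [intervalIntegral.integral_symm, intervalIntegral_indicator_Ico hθ, max_eq_right h₂, h₁,
      neg_zero]

/-- Rate into arc `a_j` of commodity `i` when it sends a unit-rate pulse of length `δ`, starting
at time `s`, along its path `v_i → v_{i+1} → ⋯ → v_{i-1}` without waiting at any node. -/
noncomputable def pathRate (k i : ℕ) (s δ : ℝ) (j : ℕ) (θ : ℝ) : ℝ :=
  if rel k i j + 1 < k then (Ico (s + rel k i j) (s + rel k i j + δ)).indicator 1 θ else 0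

noncomputable def cumFlow (g : ℕ → ℝ → ℝ) (j : ℕ) (θ : ℝ) : ℝ := ∫ ξ in (0 : ℝ)..θ, g j ξ

noncomputable def netInflow (k : ℕ) (g : ℕ → ℝ → ℝ) (m : ℕ) (θ : ℝ) : ℝ :=
  cumFlow g ((m + k - 1) % k) (θ - 1) - cumFlow g m θ

variable {s δ θ T : ℝ}

lemma cumFlow_pathRate (hs : 0 ≤ s) :
    cumFlow (pathRate k i s δ) j θ =
      if rel k i j + 1 < k then ramp δ (θ - (s + rel k i j)) else 0 := by
  unfold cumFlow pathRate
  split_ifs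
  · exact integral_indicator_Ico (by positivity) δ θ
  · exact intervalIntegral.integral_zero

lemma netInflow_pathRate (hk : 2 ≤ k) (hi : i < k) (hm : m < k) (hs : 0 ≤ s) :
    netInflow k (pathRate k i s δ) m θ =
      if m = (i + k - 1) % k then ramp δ (θ - (s + (k - 1)))
      else if m = i then -ramp δ (θ - s) else 0 := by
  rw [netInflow, cumFlow_pathRate hs, cumFlow_pathRate hs]
  by_cases hsink : m = (i + k - 1) % k
  · have hrel := rel_pred hi hm (hsink ▸ add_sub_one_mod_ne_self hk hi)
    rw [(rel_eq_sub_one_iff hi hm).2 hsink] at hrel ⊢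
    have hcast : (rel k i ((m + k - 1) % k) : ℝ) + 2 = k := by exact_mod_cast (by omega : _ = k)
    rw [if_pos (by omega), if_neg (by omega), if_pos hsink, sub_zero]
    congr 1; linarith
  by_cases hmi : m = i
  · subst hmi
    rw [rel_pred_self hi, (rel_eq_zero_iff hi hm).2 rfl]
    simp [hsink, show 0 + 1 < k by omega, show ¬(k - 1 + 1 < k) by omega]
  have hrel := rel_pred hi hm hmi
  have hcast : (rel k i ((m + k - 1) % k) : ℝ) + 1 = rel k i m := by exact_mod_cast hrel
  have hlt : rel k i m + 1 < k := by
    have := rel_lt (i := i) (j := m) (by omega : 0 < k)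
    have := (rel_eq_sub_one_iff hi hm).not.2 hsink
    omega
  rw [if_pos (by omega), if_pos hlt, if_neg hsink, if_neg hmi, sub_eq_zero]
  congr 1; linarith

lemma pathRate_nonneg : 0 ≤ pathRate k i s δ j θ := by
  unfold pathRate; split_ifs
  exacts [indicator_nonneg (fun _ _ => zero_le_one) _, le_rfl]

lemma pathRate_le_one : pathRate k i s δ j θ ≤ 1 := by
  unfold pathRate; split_ifs
  exacts [indicator_le_self' (fun _ _ => zero_le_one) _, zero_le_one]

lemma integrable_pathRate : Integrable (pathRate k i s δ j) := by
  unfold pathRate; split_ifs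
  · exact (integrable_indicator_iff measurableSet_Ico).2 (integrableOn_const (by simp))
  · exact integrable_zero _ _ _

lemma pathRate_zero_right : pathRate k i s 0 j θ = 0 := by
  simp [pathRate]

lemma pathRate_eq_zero_of_lt (hθ : θ < s) : pathRate k i s δ j θ = 0 := by
  unfold pathRate; split_ifs
  · have : (0 : ℝ) ≤ rel k i j := Nat.cast_nonneg _
    exact indicator_of_notMem (fun h => by linarith [h.1]) _
  · rfl

lemma pathRate_eq_zero_of_le (hθ : s + (k - 2) + δ ≤ θ) : pathRate k i s δ j θ = 0 := by
  unfold pathRate; split_ifs with h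
  · have : (rel k i j : ℝ) + 2 ≤ k := by exact_mod_cast h
    exact indicator_of_notMem (fun h => by linarith [h.2]) _
  · rfl

lemma netInflow_pathRate_nonneg (hk : 2 ≤ k) (hi : i < k) (hm : m < k) (hmi : m ≠ i)
    (hs : 0 ≤ s) : 0 ≤ netInflow k (pathRate k i s δ) m θ := by
  rw [netInflow_pathRate hk hi hm hs, if_neg hmi]
  split_ifs
  exacts [ramp_nonneg _ _, le_rfl]

lemma netInflow_pathRate_eq_zero (hk : 2 ≤ k) (hi : i < k) (hm : m < k) (hmi : m ≠ i)
    (hsink : m ≠ (i + k - 1) % k) (hs : 0 ≤ s) : netInflow k (pathRate k i s δ) m θ = 0 := by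
  rw [netInflow_pathRate hk hi hm hs, if_neg hsink, if_neg hmi]

lemma netInflow_pathRate_of_complete (hk : 2 ≤ k) (hi : i < k) (hm : m < k) (hs : 0 ≤ s)
    (hδ : 0 ≤ δ) (hθ : δ = 0 ∨ s + (k - 1) + δ ≤ θ) :
    netInflow k (pathRate k i s δ) m θ =
      if m = (i + k - 1) % k then δ else if m = i then -δ else 0 := by
  have hk1 : (1 : ℝ) ≤ k := by exact_mod_cast (by omega : 1 ≤ k)
  have hramp : ∀ x ≤ s + (k - 1), ramp δ (θ - x) = δ := by
    intro x hx
    rcases hθ with rfl | hθ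
    · exact ramp_zero_left _
    · exact ramp_of_le hδ (by linarith)
  rw [netInflow_pathRate hk hi hm hs, hramp _ le_rfl, hramp s (by linarith)]

lemma netInflow_add {g₁ g₂ : ℕ → ℝ → ℝ} (h₁ : ∀ j, Integrable (g₁ j))
    (h₂ : ∀ j, Integrable (g₂ j)) :
    netInflow k (g₁ + g₂) m θ = netInflow k g₁ m θ + netInflow k g₂ m θ := by
  simp only [netInflow, cumFlow, Pi.add_apply]
  rw [intervalIntegral.integral_add (h₁ _).intervalIntegrable (h₂ _).intervalIntegrable,
    intervalIntegral.integral_add (h₁ _).intervalIntegrable (h₂ _).intervalIntegrable]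
  ring

noncomputable def waveFlow (k : ℕ) (e : ℝ) (i : ℕ) : ℕ → ℝ → ℝ :=
  pathRate k i 0 1 + if i = 0 then pathRate k 0 (k - 1) e else 0

variable {e : ℝ}

lemma netInflow_waveFlow :
    netInflow k (waveFlow k e i) m θ =
      netInflow k (pathRate k i 0 1) m θ +
        if i = 0 then netInflow k (pathRate k 0 (k - 1) e) m θ else 0 := by
  rw [waveFlow, netInflow_add (fun _ => integrable_pathRate)]
  · split_ifs
    · rfl
    · simp [netInflow, cumFlow]
  · intro j; split_ifs
    exacts [integrable_pathRate, integrable_zero _ _ _]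

lemma sum_range_indicator_Ico_add_one (n : ℕ) (θ : ℝ) :
    ∑ l ∈ Finset.range n, (Ico (l : ℝ) (l + 1)).indicator (1 : ℝ → ℝ) θ =
      (Ico 0 (n : ℝ)).indicator 1 θ := by
  induction n with
  | zero => simp
  | succ n ih =>
    rw [Finset.sum_range_succ, ih,
      ← indicator_union_of_notMem_inter (fun h => Ico_disjoint_Ico_same.le_bot h),
      Ico_union_Ico_eq_Ico (Nat.cast_nonneg n) (by linarith), Nat.cast_succ]

lemma sum_pathRate_zero_one (hj : j < k) :
    ∑ i ∈ Finset.range k, pathRate k i 0 1 j θ = (Ico 0 ((k : ℝ) - 1)).indicator 1 θ := by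
  obtain ⟨n, rfl⟩ : ∃ n, k = n + 1 := ⟨k - 1, by omega⟩
  let g (l : ℕ) : ℝ := if l + 1 < n + 1 then (Ico (l : ℝ) (l + 1)).indicator 1 θ else 0
  have hrate : ∀ i, pathRate (n + 1) i 0 1 j θ = g (rel (n + 1) i j) := by
    simp [pathRate, g]
  simp only [hrate, sum_comp_rel_left hj g, g, Finset.sum_range_succ, lt_irrefl, if_false, add_zero]
  rw [Finset.sum_congr rfl (fun l hl => if_pos (by simpa using hl)),
    sum_range_indicator_Ico_add_one, Nat.cast_succ, add_sub_cancel_right]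

lemma sum_waveFlow_le_one (hj : j < k) : ∑ i ∈ Finset.range k, waveFlow k e i j θ ≤ 1 := by
  have hk : 0 < k := by omega
  simp only [waveFlow, Pi.add_apply, ite_apply, Pi.zero_apply, Finset.sum_add_distrib,
    Finset.sum_ite_eq', Finset.mem_range, if_pos hk, sum_pathRate_zero_one hj]
  rcases lt_or_ge θ (k - 1) with hθ | hθ
  · rw [pathRate_eq_zero_of_lt hθ, add_zero]
    exact indicator_le_self' (fun _ _ => zero_le_one) _
  · rw [indicator_of_notMem (fun h => by linarith [h.2]), zero_add]
    exact pathRate_le_one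

lemma waveFlow_eq_zero_of_notMem (hk : 2 ≤ k) (hT : k ≤ T) (hTe : e = 0 ∨ 2 * k - 2 + e ≤ T)
    (hθ : θ ∉ Ico 0 T) : waveFlow k e i j θ = 0 := by
  have hk2 : (2 : ℝ) ≤ k := by exact_mod_cast hk
  simp only [mem_Ico, not_and_or, not_le, not_lt] at hθ
  simp only [waveFlow, Pi.add_apply, ite_apply, Pi.zero_apply]
  rcases hθ with hθ | hθ
  · rw [pathRate_eq_zero_of_lt hθ, pathRate_eq_zero_of_lt (by linarith), ite_self, add_zero]
  · rw [pathRate_eq_zero_of_le (by linarith), zero_add]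
    rcases hTe with rfl | hTe
    · simp [pathRate_zero_right]
    · rw [pathRate_eq_zero_of_le (by linarith), ite_self]

lemma integrable_waveFlow : Integrable (waveFlow k e i j) := by
  simp only [waveFlow]; split_ifs
  exacts [integrable_pathRate.add integrable_pathRate,
    integrable_pathRate.add (integrable_zero _ _ _)]

lemma waveFlow_nonneg : 0 ≤ waveFlow k e i j θ := by
  simp only [waveFlow, Pi.add_apply, ite_apply, Pi.zero_apply]; split_ifs
  exacts [add_nonneg pathRate_nonneg pathRate_nonneg, add_nonneg pathRate_nonneg le_rfl]

lemma netInflow_waveFlow_nonneg (hk : 2 ≤ k) (hi : i < k) (hm : m < k) (hmi : m ≠ i) :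
    0 ≤ netInflow k (waveFlow k e i) m θ := by
  rw [netInflow_waveFlow]
  refine add_nonneg (netInflow_pathRate_nonneg hk hi hm hmi le_rfl) ?_
  split_ifs with hi0
  · subst hi0
    exact netInflow_pathRate_nonneg hk hi hm hmi (by linarith [(Nat.one_le_cast (α := ℝ)).2 hi])
  · exact le_rfl

lemma netInflow_waveFlow_eq_zero (hk : 2 ≤ k) (hi : i < k) (hm : m < k) (hmi : m ≠ i)
    (hsink : m ≠ (i + k - 1) % k) : netInflow k (waveFlow k e i) m θ = 0 := by
  rw [netInflow_waveFlow, netInflow_pathRate_eq_zero hk hi hm hmi hsink le_rfl, zero_add]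
  split_ifs with hi0
  · subst hi0
    exact netInflow_pathRate_eq_zero hk hi hm hmi hsink
      (by linarith [(Nat.one_le_cast (α := ℝ)).2 hi])
  · rfl

lemma netInflow_waveFlow_of_complete (hk : 2 ≤ k) (hi : i < k) (hm : m < k) (he : 0 ≤ e)
    (hT : k ≤ T) (hTe : e = 0 ∨ 2 * k - 2 + e ≤ T) :
    netInflow k (waveFlow k e i) m T =
      if m = (i + k - 1) % k then (if i = 0 then 1 + e else 1)
      else if m = i then -(if i = 0 then 1 + e else 1) else 0 := by
  have hk1 : (1 : ℝ) ≤ k := by exact_mod_cast (by omega : 1 ≤ k)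
  rw [netInflow_waveFlow, netInflow_pathRate_of_complete hk hi hm le_rfl zero_le_one
    (Or.inr (by linarith))]
  by_cases hi0 : i = 0
  · subst hi0
    rw [netInflow_pathRate_of_complete hk hi hm (by linarith) he
      (hTe.imp_right fun h => by linarith)]
    simp only [↓reduceIte]
    split_ifs <;> ring
  · simp only [if_neg hi0, add_zero]

lemma waveFlow_feasible (hk : 2 ≤ k) (he : 0 ≤ e) (hT : k ≤ T)
    (hTe : e = 0 ∨ 2 * k - 2 + e ≤ T) :
    IsMCFlow k T (fun i => if i = 0 then 1 + e else 1) (waveFlow k e) ∧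
      NoStorage k T (waveFlow k e) :=
  ⟨⟨by linarith [(Nat.ofNat_le_cast (α := ℝ)).2 hk], fun _ _ _ _ => integrable_waveFlow,
    fun _ _ _ _ _ => waveFlow_nonneg,
    fun _ _ _ _ _ hθ => waveFlow_eq_zero_of_notMem hk hT hTe hθ,
    fun _ hj => ae_of_all _ fun _ => sum_waveFlow_le_one hj,
    fun _ hi _ hm hmi _ _ => netInflow_waveFlow_nonneg hk hi hm hmi,
    fun _ hi _ hm => netInflow_waveFlow_of_complete hk hi hm he hT hTe⟩,
    fun _ hi _ hm hmi hsink _ _ => sub_eq_zero.1 (netInflow_waveFlow_eq_zero hk hi hm hmi hsink)⟩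

end CycleFlow

open CycleFlow

variable {k i j m : ℕ} {T a b θ : ℝ} {d : ℕ → ℝ} {f : ℕ → ℕ → ℝ → ℝ}

namespace IsMCFlow

lemma cumFlow_sub (hf : IsMCFlow k T d f) (hi : i < k) (hj : j < k) (a b : ℝ) :
    cumFlow (f i) j b - cumFlow (f i) j a = ∫ ξ in a..b, f i j ξ := by
  obtain ⟨-, hint, -⟩ := hf
  exact intervalIntegral.integral_interval_sub_left (hint i hi j hj).intervalIntegrable
    (hint i hi j hj).intervalIntegrable

lemma cumFlow_mono (hf : IsMCFlow k T d f) (hi : i < k) (hj : j < k) :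
    Monotone (cumFlow (f i) j) := fun a b hab => by
  rw [← sub_nonneg, hf.cumFlow_sub hi hj a b]
  obtain ⟨-, -, hnonneg, -⟩ := hf
  exact intervalIntegral.integral_nonneg hab fun x _ => hnonneg i hi j hj x

lemma cumFlow_of_nonpos (hf : IsMCFlow k T d f) (hi : i < k) (hj : j < k)
    (hθ : θ ≤ 0) : cumFlow (f i) j θ = 0 := by
  obtain ⟨-, -, -, hvanish, -⟩ := hf
  refine intervalIntegral.integral_zero_ae ?_
  filter_upwards [(countable_singleton (0 : ℝ)).ae_notMem volume] with x hx0 hx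
  rw [uIoc_of_ge hθ] at hx
  exact hvanish i hi j hj x fun h => hx0 (le_antisymm hx.2 h.1)

lemma sum_cumFlow_sub_le (hf : IsMCFlow k T d f) (hj : j < k) (hab : a ≤ b) :
    ∑ i ∈ Finset.range k, (cumFlow (f i) j b - cumFlow (f i) j a) ≤ b - a := by
  have hsub := fun i (hi : i ∈ Finset.range k) => hf.cumFlow_sub (Finset.mem_range.1 hi) hj a b
  obtain ⟨-, hint, -, -, hcap, -⟩ := hf
  have hint : ∀ i ∈ Finset.range k, IntervalIntegrable (f i j) volume a b :=
    fun i hi => (hint i (Finset.mem_range.1 hi) j hj).intervalIntegrable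
  calc ∑ i ∈ Finset.range k, (cumFlow (f i) j b - cumFlow (f i) j a)
      = ∫ ξ in a..b, ∑ i ∈ Finset.range k, f i j ξ := by
        rw [intervalIntegral.integral_finsetSum hint, Finset.sum_congr rfl hsub]
    _ ≤ ∫ _ in a..b, (1 : ℝ) := by
        refine intervalIntegral.integral_mono_ae hab ?_ intervalIntegrable_const (hcap j hj)
        simpa only [← Finset.sum_fn] using IntervalIntegrable.sum _ hint
    _ = b - a := by simp

end IsMCFlow

namespace NoStorage

lemma cumFlow_pred (hns : NoStorage k T f) (hf : IsMCFlow k T d f) (hi : i < k)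
    (hm : m < k) (hmi : m ≠ i) (hsink : m ≠ (i + k - 1) % k) (hθ : θ ≤ T) :
    cumFlow (f i) ((m + k - 1) % k) (θ - 1) = cumFlow (f i) m θ := by
  rcases lt_or_ge θ 0 with hθ0 | hθ0
  · rw [hf.cumFlow_of_nonpos hi (Nat.mod_lt _ (by omega)) (by linarith),
      hf.cumFlow_of_nonpos hi hm hθ0.le]
  rcases hθ.lt_or_eq with hθT | rfl
  · exact hns i hi m hm hmi hsink θ ⟨hθ0, hθT⟩
  · obtain ⟨-, -, -, -, -, -, hdemand⟩ := hf
    have := hdemand i hi m hm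
    rw [if_neg hsink, if_neg hmi] at this
    exact sub_eq_zero.1 this

lemma cumFlow_eq_source (hns : NoStorage k T f) (hf : IsMCFlow k T d f)
    (hi : i < k) (hj : j < k) (hrel : rel k i j + 1 < k) (hθ : θ ≤ T) :
    cumFlow (f i) j θ = cumFlow (f i) i (θ - rel k i j) := by
  induction hn : rel k i j generalizing j θ with
  | zero => rw [(rel_eq_zero_iff hi hj).1 hn, Nat.cast_zero, sub_zero]
  | succ n ih =>
    have hji : j ≠ i := fun h => by simp [h, (rel_eq_zero_iff hi hi).2 rfl] at hn
    have hsink : j ≠ (i + k - 1) % k := fun h => by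
      have := (rel_eq_sub_one_iff hi hj).2 h; omega
    have hpred := rel_pred hi hj hji
    rw [← hns.cumFlow_pred hf hi hj hji hsink hθ,
      ih (Nat.mod_lt _ (by omega)) (by omega) (by linarith) (by omega), Nat.cast_succ, sub_sub,
      add_comm 1]

lemma demand_le_cumFlow_source (hns : NoStorage k T f) (hf : IsMCFlow k T d f) (hk : 2 ≤ k)
    (hi : i < k) : d i ≤ cumFlow (f i) i (T - (k - 1)) := by
  set t := (i + k - 1) % k
  have ht : t < k := Nat.mod_lt _ (by omega)
  have ⟨_, _, _, _, _, _, hdemand⟩ := hf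
  have hdem : cumFlow (f i) ((t + k - 1) % k) (T - 1) - cumFlow (f i) t T = d i :=
    (hdemand i hi t ht).trans (if_pos rfl)
  have hrel : rel k i ((t + k - 1) % k) + 2 = k := by
    have := rel_pred hi ht (add_sub_one_mod_ne_self hk hi)
    rw [rel_pred_self hi] at this; omega
  have hcast : (rel k i ((t + k - 1) % k) : ℝ) + 2 = k := by exact_mod_cast hrel
  have hsink_nonneg : 0 ≤ cumFlow (f i) t T :=
    (hf.cumFlow_of_nonpos hi ht le_rfl).symm.le.trans (hf.cumFlow_mono hi ht hf.1.le)
  rw [hns.cumFlow_eq_source hf hi (Nat.mod_lt _ (by omega)) (by omega) (by linarith)] at hdem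
  rw [show T - (k - 1) = T - 1 - rel k i ((t + k - 1) % k) by linarith]
  linarith

lemma demand_le_sum_window (hns : NoStorage k T f) (hf : IsMCFlow k T d f) (hk : 2 ≤ k)
    (hi : i < k) (hT : T ≤ 2 * k - 2) :
    d i ≤ ∑ j ∈ Finset.range k,
      (cumFlow (f i) j (T - (k - 1)) - cumFlow (f i) j (T - (k - 1) - 1)) := by
  have hk1 : (1 : ℝ) ≤ k := by exact_mod_cast (by omega : 1 ≤ k)
  set S := T - (k - 1)
  set G := cumFlow (f i) i
  let g (l : ℕ) : ℝ := if l + 1 < k then G (S - l) - G (S - (l + 1 : ℕ)) else 0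
  have hterm : ∀ j ∈ Finset.range k,
      g (rel k i j) ≤ cumFlow (f i) j S - cumFlow (f i) j (S - 1) := by
    intro j hj
    rw [Finset.mem_range] at hj
    simp only [g]
    split_ifs with hrel
    · rw [hns.cumFlow_eq_source hf hi hj hrel (by linarith),
        hns.cumFlow_eq_source hf hi hj hrel (by linarith), Nat.cast_succ, sub_add_eq_sub_sub_swap]
    · exact sub_nonneg.2 (hf.cumFlow_mono hi hj (by linarith))
  have htelescope : ∑ l ∈ Finset.range k, g l = G S - G (S - (k - 1 : ℕ)) := by
    obtain ⟨n, rfl⟩ : ∃ n, k = n + 1 := ⟨k - 1, by omega⟩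
    simp only [g, Finset.sum_range_succ _ n, lt_irrefl, if_false, add_zero]
    rw [Finset.sum_congr rfl fun l hl => if_pos (by simpa using hl),
      Finset.sum_range_sub' (fun l : ℕ => G (S - l)), Nat.cast_zero, sub_zero, Nat.add_sub_cancel]
  calc d i ≤ G S := hns.demand_le_cumFlow_source hf hk hi
    _ = G S - G (S - (k - 1 : ℕ)) := by
        have hG : G (S - (k - 1 : ℕ)) = 0 :=
          hf.cumFlow_of_nonpos hi hi (by push_cast [Nat.cast_sub (by omega : 1 ≤ k)]; linarith)
        rw [hG, sub_zero]
    _ = ∑ j ∈ Finset.range k, g (rel k i j) := by rw [sum_comp_rel_right hi, htelescope]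
    _ ≤ _ := Finset.sum_le_sum hterm

lemma sum_demand_le (hns : NoStorage k T f) (hf : IsMCFlow k T d f) (hk : 2 ≤ k)
    (hT : T ≤ 2 * k - 2) : ∑ i ∈ Finset.range k, d i ≤ k := by
  set S := T - (k - 1)
  calc ∑ i ∈ Finset.range k, d i
      ≤ ∑ i ∈ Finset.range k, ∑ j ∈ Finset.range k,
          (cumFlow (f i) j S - cumFlow (f i) j (S - 1)) :=
        Finset.sum_le_sum fun i hi => hns.demand_le_sum_window hf hk (Finset.mem_range.1 hi) hT
    _ = ∑ j ∈ Finset.range k, ∑ i ∈ Finset.range k,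
          (cumFlow (f i) j S - cumFlow (f i) j (S - 1)) := Finset.sum_comm
    _ ≤ ∑ j ∈ Finset.range k, (S - (S - 1)) :=
        Finset.sum_le_sum fun j hj => hf.sum_cumFlow_sub_le (Finset.mem_range.1 hj) (by linarith)
    _ = k := by simp

lemma two_mul_sub_two_lt {ε : ℝ} (hns : NoStorage k T f)
    (hf : IsMCFlow k T (fun i => if i = 0 then 1 + ε else 1) f) (hk : 2 ≤ k) (hε : 0 < ε) :
    2 * k - 2 < T := by
  by_contra! hT
  have hsum := hns.sum_demand_le hf hk hT
  obtain ⟨n, rfl⟩ : ∃ n, k = n + 1 := ⟨k - 1, by omega⟩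
  have : ε ≤ 0 := by simpa [Finset.sum_range_succ'] using hsum
  linarith

end NoStorage

/-- For every `k ≥ 3`, the optimal time horizon without intermediate storage, as a function of
the demand `d₀` of commodity `0`, is not continuous at `d₀ = 1`: we have `Tstar k 1 ≤ k` while
`Tstar k (1 + ε) ≥ 2k - 2` for every `ε > 0`; since `2k - 2 > k`, the function `Tstar k` is
not right-continuous at `1`. -/
theorem Tstar_not_right_continuous (k : ℕ) (hk : 3 ≤ k) :
    Tstar k 1 ≤ (k : ℝ) ∧
    (∀ ε : ℝ, 0 < ε → 2 * (k : ℝ) - 2 ≤ Tstar k (1 + ε)) ∧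
    (k : ℝ) < 2 * (k : ℝ) - 2 ∧
    ¬ ContinuousWithinAt (Tstar k) (Set.Ici 1) 1 := by
  have hk3 : (3 : ℝ) ≤ k := by exact_mod_cast hk
  have hbdd (d₀ : ℝ) : BddBelow {T : ℝ | ∃ f : ℕ → ℕ → ℝ → ℝ,
      IsMCFlow k T (fun i => if i = 0 then d₀ else 1) f ∧ NoStorage k T f} :=
    ⟨0, fun _ ⟨_, hf, _⟩ => hf.1.le⟩
  have hupper : Tstar k 1 ≤ k := by
    refine csInf_le (hbdd 1) ⟨waveFlow k 0, ?_⟩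
    simpa only [add_zero] using waveFlow_feasible (T := k) (by omega) le_rfl le_rfl (Or.inl rfl)
  have hlower (ε : ℝ) (hε : 0 < ε) : 2 * (k : ℝ) - 2 ≤ Tstar k (1 + ε) :=
    le_csInf ⟨_, waveFlow k ε, waveFlow_feasible (by omega) hε.le (by linarith) (Or.inr le_rfl)⟩
      fun _ ⟨_, hf, hns⟩ => (hns.two_mul_sub_two_lt hf (by omega) hε).le
  refine ⟨hupper, hlower, by linarith, fun hcont => ?_⟩
  have hjump : 2 * (k : ℝ) - 2 ≤ Tstar k 1 :=
    ge_of_tendsto (hcont.mono Ioi_subset_Ici_self) <| eventually_nhdsWithin_of_forall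
      fun x hx => by simpa using hlower (x - 1) (sub_pos.2 hx)
  linarith
end
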